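/- Let ρ be a normalized state on A and Π a positive semidefinite operator on A with Π ≤ Id. Then the purified distance between ρ and ΠρΠ satisfies P(ρ, ΠρΠ) ≤ sqrt(1 − (tr[Π² ρ])²). -/

import Mathlib

open scoped Classical Kronecker ComplexOrder

noncomputable section

namespace QIT

variable {ι κ γ : Type*} [Fintype ι] [DecidableEq ι] [Fintype κ] [DecidableEq κ]
  [Fintype γ] [DecidableEq γ]

/-- The old Mathlib `Matrix.PosSemidef.sqrt` (removed since), with its old definition. -/
def psdSqrt {A : Matrix ι ι ℂ} (hA : A.PosSemidef) : Matrix ι ι ℂ :=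
  hA.1.eigenvectorUnitary.1 * Matrix.diagonal ((↑) ∘ (√·) ∘ hA.1.eigenvalues) *
  (star hA.1.eigenvectorUnitary : Matrix ι ι ℂ)

/-- Trace norm `‖A‖₁ = tr √(AᴴA)`. -/
def traceNorm (A : Matrix ι ι ℂ) : ℝ :=
  (psdSqrt (Matrix.posSemidef_conjTranspose_mul_self A)).trace.re

/-- Matrix square root (of a PSD matrix; junk value `0` otherwise). -/
def msqrt (A : Matrix ι ι ℂ) : Matrix ι ι ℂ :=
  if h : A.PosSemidef then psdSqrt h else 0

/-- Fidelity `F(ρ,σ) = ‖√ρ√σ‖₁`. -/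
def fidelity (ρ σ : Matrix ι ι ℂ) : ℝ := traceNorm (msqrt ρ * msqrt σ)

/-- Generalized fidelity. -/
def genFid (ρ σ : Matrix ι ι ℂ) : ℝ :=
  fidelity ρ σ + Real.sqrt ((1 - ρ.trace.re) * (1 - σ.trace.re))

/-- Purified distance. -/
def purifiedDist (ρ σ : Matrix ι ι ℂ) : ℝ := Real.sqrt (1 - genFid ρ σ ^ 2)

def IsSubnormalized (ρ : Matrix ι ι ℂ) : Prop := ρ.PosSemidef ∧ ρ.trace.re ≤ 1

def IsDensity (ρ : Matrix ι ι ℂ) : Prop := ρ.PosSemidef ∧ ρ.trace = 1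

/-- Max-relative entropy `D_max(ρ‖σ) = inf {λ : 2^λ σ ≥ ρ}`. -/
def Dmax (ρ σ : Matrix ι ι ℂ) : ℝ :=
  sInf {l : ℝ | ((((2:ℝ) ^ l : ℝ) : ℂ) • σ - ρ).PosSemidef}

/-- Partial trace over the first factor. -/
def ptrace₁ (ρ : Matrix (ι × κ) (ι × κ) ℂ) : Matrix κ κ ℂ :=
  Matrix.of fun (b b' : κ) => ∑ a, ρ (a, b) (a, b')

/-- Partial trace over the second factor. -/
def ptrace₂ (ρ : Matrix (ι × κ) (ι × κ) ℂ) : Matrix ι ι ℂ :=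
  Matrix.of fun (a a' : ι) => ∑ b, ρ (a, b) (a', b)

/-- Max-information `I_max(A:B)_ρ = inf_{σ_B} D_max(ρ_{AB}‖ρ_A ⊗ σ_B)`. -/
def Imax (ρ : Matrix (ι × κ) (ι × κ) ℂ) : ℝ :=
  sInf {x : ℝ | ∃ σ : Matrix κ κ ℂ, IsDensity σ ∧ x = Dmax ρ (ptrace₂ ρ ⊗ₖ σ)}

/-- Conditional min-entropy `H_min(A|B)_ρ = −inf_{σ_B} D_max(ρ_{AB}‖Id_A ⊗ σ_B)`. -/
def HminCond (ρ : Matrix (ι × κ) (ι × κ) ℂ) : ℝ :=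
  - sInf {x : ℝ | ∃ σ : Matrix κ κ ℂ, IsDensity σ ∧ x = Dmax ρ ((1 : Matrix ι ι ℂ) ⊗ₖ σ)}

/-- Largest eigenvalue (operator norm for PSD matrices). -/
def maxEig (ρ : Matrix ι ι ℂ) : ℝ :=
  if h : ρ.IsHermitian then ⨆ i, h.eigenvalues i else 0

/-- Zero-Rényi entropy `H₀ = log rank`. -/
def H0 (ρ : Matrix ι ι ℂ) : ℝ := Real.logb 2 ρ.rank

/-- Min-entropy `H_min = −log ‖ρ‖_∞`. -/
def Hmin (ρ : Matrix ι ι ℂ) : ℝ := - Real.logb 2 (maxEig ρ)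

/-- Max-entropy `H_max = 2 log tr √ρ`. -/
def Hmax (ρ : Matrix ι ι ℂ) : ℝ := 2 * Real.logb 2 (msqrt ρ).trace.re

def smoothH0 (ε : ℝ) (ρ : Matrix ι ι ℂ) : ℝ :=
  sInf {x : ℝ | ∃ σ : Matrix ι ι ℂ, IsSubnormalized σ ∧ purifiedDist σ ρ ≤ ε ∧ x = H0 σ}

def smoothHmax (ε : ℝ) (ρ : Matrix ι ι ℂ) : ℝ :=
  sInf {x : ℝ | ∃ σ : Matrix ι ι ℂ, IsSubnormalized σ ∧ purifiedDist σ ρ ≤ ε ∧ x = Hmax σ}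

def smoothImax (ε : ℝ) (ρ : Matrix (ι × κ) (ι × κ) ℂ) : ℝ :=
  sInf {x : ℝ | ∃ σ : Matrix (ι × κ) (ι × κ) ℂ,
    IsSubnormalized σ ∧ purifiedDist σ ρ ≤ ε ∧ x = Imax σ}


/-!
With `B = √ρ` and `S = √(QρQ)` one has `(BS)(BS)ᴴ = (BQB)²`. Since `YᴴY` and `YYᴴ` are
isospectral, `‖Y‖₁ = tr √(YYᴴ)`, so the fidelity of `ρ` and `QρQ` is `tr (BQB) = tr (Qρ)`; as
`tr ρ = 1` this is also the generalized fidelity. Finally `0 ≤ tr (Q²ρ) ≤ tr (Qρ)` because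
`Q - Q² = Q (1 - Q) ≥ 0`.
-/

open Matrix

lemma psdSqrt_eq_sqrt {A : Matrix ι ι ℂ} (hA : A.PosSemidef) :
    open scoped MatrixOrder in psdSqrt hA = CFC.sqrt A := by
  open scoped MatrixOrder in
  rw [CFC.sqrt_eq_cfc, cfc_nnreal_eq_real _ A hA.nonneg, hA.1.cfc_eq]
  simp only [IsHermitian.cfc, psdSqrt, Unitary.conjStarAlgAut_apply]
  congr 3
  funext i
  simp [Real.coe_toNNReal', max_eq_left (hA.eigenvalues_nonneg i)]

lemma posSemidef_psdSqrt {A : Matrix ι ι ℂ} (hA : A.PosSemidef) : (psdSqrt hA).PosSemidef := by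
  open scoped MatrixOrder in
  rw [psdSqrt_eq_sqrt, ← nonneg_iff_posSemidef]; exact CFC.sqrt_nonneg A

lemma psdSqrt_mul_self {A : Matrix ι ι ℂ} (hA : A.PosSemidef) : psdSqrt hA * psdSqrt hA = A := by
  open scoped MatrixOrder in
  rw [psdSqrt_eq_sqrt]; exact CFC.sqrt_mul_sqrt_self A hA.nonneg

lemma eq_psdSqrt_of_mul_self_eq {A B : Matrix ι ι ℂ} (hA : A.PosSemidef) (hB : B.PosSemidef)
    (h : B * B = A) : B = psdSqrt hA := by
  open scoped MatrixOrder in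
  rw [psdSqrt_eq_sqrt]; exact (CFC.sqrt_unique h hB.nonneg).symm

lemma msqrt_of_posSemidef {A : Matrix ι ι ℂ} (hA : A.PosSemidef) : msqrt A = psdSqrt hA :=
  dif_pos hA

lemma trace_psdSqrt {A : Matrix ι ι ℂ} (hA : A.PosSemidef) :
    (psdSqrt hA).trace = ∑ i, ((√(hA.1.eigenvalues i) : ℝ) : ℂ) := by
  rw [psdSqrt, trace_mul_cycle, Unitary.coe_star_mul_self, Matrix.one_mul, trace_diagonal]
  rfl

/-- `YᴴY` and `YYᴴ` have the same characteristic polynomial, hence the same eigenvalues. -/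
lemma traceNorm_eq_re_trace_psdSqrt_mul_conjTranspose (Y : Matrix ι ι ℂ) :
    traceNorm Y = (psdSqrt (posSemidef_self_mul_conjTranspose Y)).trace.re := by
  rw [traceNorm, trace_psdSqrt, trace_psdSqrt,
    (IsHermitian.eigenvalues_eq_eigenvalues_iff _ _).2 (charpoly_mul_comm _ _)]

lemma traceNorm_eq_re_trace_of_mul_self_eq {Y M : Matrix ι ι ℂ} (hM : M.PosSemidef)
    (h : M * M = Y * Yᴴ) : traceNorm Y = M.trace.re := by
  rw [traceNorm_eq_re_trace_psdSqrt_mul_conjTranspose,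
    ← eq_psdSqrt_of_mul_self_eq (posSemidef_self_mul_conjTranspose Y) hM h]

lemma re_trace_mul_nonneg {A B : Matrix ι ι ℂ} (hA : A.PosSemidef) (hB : B.PosSemidef) :
    0 ≤ (A * B).trace.re := by
  have hconj : (psdSqrt hB * A * psdSqrt hB).PosSemidef := by
    simpa [(posSemidef_psdSqrt hB).1.eq] using hA.conjTranspose_mul_mul_same (psdSqrt hB)
  rw [← psdSqrt_mul_self hB, ← Matrix.mul_assoc, trace_mul_cycle]
  exact Complex.nonneg_iff.mp hconj.trace_nonneg |>.1

lemma posSemidef_sub_mul_self {Q : Matrix ι ι ℂ} (hQ : Q.PosSemidef) (hle : (1 - Q).PosSemidef) :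
    (Q - Q * Q).PosSemidef := by
  open scoped MatrixOrder in
  rw [← nonneg_iff_posSemidef] at *
  simpa [mul_sub] using
    Commute.mul_nonneg hQ hle ((Commute.one_right Q).sub_right (Commute.refl Q))

lemma re_trace_mul_mul_le {Q ρ : Matrix ι ι ℂ} (hQ : Q.PosSemidef) (hle : (1 - Q).PosSemidef)
    (hρ : ρ.PosSemidef) : (Q * Q * ρ).trace.re ≤ (Q * ρ).trace.re := by
  have := re_trace_mul_nonneg (posSemidef_sub_mul_self hQ hle) hρ
  rw [Matrix.sub_mul, trace_sub, Complex.sub_re] at this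
  linarith

lemma fidelity_mul_mul_eq_re_trace_mul {ρ Q : Matrix ι ι ℂ} (hρ : ρ.PosSemidef)
    (hQ : Q.PosSemidef) : fidelity ρ (Q * ρ * Q) = (Q * ρ).trace.re := by
  have hσ : (Q * ρ * Q).PosSemidef := by simpa [hQ.1.eq] using hρ.mul_mul_conjTranspose_same Q
  set B := psdSqrt hρ
  have hB : B.PosSemidef := posSemidef_psdSqrt hρ
  have hBQB : (B * Q * B).PosSemidef := by
    simpa [hB.1.eq] using hQ.mul_mul_conjTranspose_same B
  rw [fidelity, msqrt_of_posSemidef hρ, msqrt_of_posSemidef hσ,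
    traceNorm_eq_re_trace_of_mul_self_eq hBQB, trace_mul_cycle, psdSqrt_mul_self hρ,
    trace_mul_comm]
  calc B * Q * B * (B * Q * B) = B * (Q * (B * B) * Q) * B := by simp only [Matrix.mul_assoc]
    _ = B * (psdSqrt hσ * psdSqrt hσ) * B := by rw [psdSqrt_mul_self hρ, psdSqrt_mul_self hσ]
    _ = B * psdSqrt hσ * (B * psdSqrt hσ)ᴴ := by
      rw [conjTranspose_mul, hB.1.eq, (posSemidef_psdSqrt hσ).1.eq]; simp only [Matrix.mul_assoc]

lemma genFid_of_trace_eq_one {ρ : Matrix ι ι ℂ} (hρ : ρ.trace = 1) (σ : Matrix ι ι ℂ) :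
    genFid ρ σ = fidelity ρ σ := by
  simp [genFid, hρ]

/-- Gentle measurement lemma for the purified distance. -/
theorem purifiedDist_gentle (ρ Q : Matrix ι ι ℂ) (hρ : IsDensity ρ)
    (hQ : Q.PosSemidef) (hle : (1 - Q).PosSemidef) :
    purifiedDist ρ (Q * ρ * Q) ≤ Real.sqrt (1 - ((Q * Q * ρ).trace.re) ^ 2) := by
  have hQQ : (Q * Q).PosSemidef := by simpa [hQ.1.eq] using posSemidef_self_mul_conjTranspose Q
  rw [purifiedDist, genFid_of_trace_eq_one hρ.2, fidelity_mul_mul_eq_re_trace_mul hρ.1 hQ]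
  gcongr √(1 - ?_ ^ 2)
  · exact re_trace_mul_nonneg hQQ hρ.1
  · exact re_trace_mul_mul_le hQ hle hρ.1

end QIT
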